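/- For every k ≥ 4, the ladder graph P_k □ P_2 (the Cartesian product of the path on k vertices with the path on 2 vertices) satisfies γ̄_p(P_k □ P_2) = ⌈(k − 4)/3⌉. -/

import Mathlib

/-- The closed neighborhood `N[S]` of a set `S` of vertices: `S` together with
all vertices adjacent to a vertex of `S`. -/
def closedNbhdSet {V : Type*} (G : SimpleGraph V) (S : Set V) : Set V :=
  S ∪ {v | ∃ u ∈ S, G.Adj u v}

/-- The monitored sets `P^i(S)` for power domination:
`P^0(S) = N[S]` and
`P^{i+1}(S) = P^i(S) ∪ { w : {w} = N[v] \ P^i(S) for some v ∈ P^i(S) }`. -/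
def monitored {V : Type*} (G : SimpleGraph V) (S : Set V) : ℕ → Set V
  | 0 => closedNbhdSet G S
  | i + 1 => monitored G S i ∪
      {w | ∃ v ∈ monitored G S i,
        (insert v (G.neighborSet v)) \ monitored G S i = {w}}

/-- The zero-forcing sets `Q^i(S)`:
`Q^0(S) = S` and
`Q^{i+1}(S) = Q^i(S) ∪ { w : {w} = N[v] \ Q^i(S) for some v ∈ Q^i(S) }`. -/
def forced {V : Type*} (G : SimpleGraph V) (S : Set V) : ℕ → Set V
  | 0 => S
  | i + 1 => forced G S i ∪
      {w | ∃ v ∈ forced G S i,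
        (insert v (G.neighborSet v)) \ forced G S i = {w}}

/-- `S` is a power dominating set if the monitored sets eventually cover all vertices. -/
def IsPowerDominatingSet {V : Type*} (G : SimpleGraph V) (S : Set V) : Prop :=
  ∃ i, monitored G S i = Set.univ

/-- `S` is a zero forcing set if the forcing process eventually covers all vertices. -/
def IsZeroForcingSet {V : Type*} (G : SimpleGraph V) (S : Set V) : Prop :=
  ∃ i, forced G S i = Set.univ

/-- The failed power domination number: the maximum cardinality of a set of
vertices that is not a power dominating set. -/
noncomputable def failedPowerDominationNumber {V : Type*} (G : SimpleGraph V) : ℕ :=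
  sSup {k | ∃ S : Set V, ¬ IsPowerDominatingSet G S ∧ S.ncard = k}

/-- The failed zero forcing number: the maximum cardinality of a set of
vertices that is not a zero forcing set. -/
noncomputable def failedZeroForcingNumber {V : Type*} (G : SimpleGraph V) : ℕ :=
  sSup {k | ∃ S : Set V, ¬ IsZeroForcingSet G S ∧ S.ncard = k}

/-!
If `S` fails, the monitored sets stabilise at a proper set `M ⊇ N[S]` in which no vertex can
force. In the ladder, two adjacent full columns of `M` then force every column, and so does a
column that meets `M` and lies between two full columns. Counting the missing columns just beyond
the two ends as full, the column of each vertex of `S` (which is full) is therefore at distance at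
least three from both ends and from the column of every other vertex of `S`, whence
`|S| ≤ ⌈(k - 4) / 3⌉`. Conversely, the centres of consecutive blocks of three columns, taken in
alternating rows, form a failed set of that size.
-/

open SimpleGraph

section PowerDomination

variable {V : Type*} {G : SimpleGraph V} {S M : Set V}

def IsForcingClosed (G : SimpleGraph V) (M : Set V) : Prop :=
  ∀ v ∈ M, ∀ w, insert v (G.neighborSet v) \ M ≠ {w}

theorem IsForcingClosed.exists_adj_notMem_ne (hM : IsForcingClosed G M) {v x : V} (hv : v ∈ M)
    (hvx : G.Adj v x) (hx : x ∉ M) : ∃ y, G.Adj v y ∧ y ∉ M ∧ y ≠ x := by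
  by_contra! h
  refine hM v hv x (Set.eq_singleton_iff_unique_mem.2 ⟨⟨Or.inr hvx, hx⟩, ?_⟩)
  rintro y ⟨rfl | hvy, hy⟩
  · exact absurd hv hy
  · exact h y hvy hy

theorem isForcingClosed_of_forall
    (h : ∀ v ∈ M, (∀ x, G.Adj v x → x ∈ M) ∨
      ∃ x y, x ≠ y ∧ G.Adj v x ∧ G.Adj v y ∧ x ∉ M ∧ y ∉ M) :
    IsForcingClosed G M := by
  intro v hv w hw
  have hwv : w ∈ insert v (G.neighborSet v) \ M := hw ▸ rfl
  rcases h v hv with hall | ⟨x, y, hxy, hvx, hvy, hx, hy⟩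
  · rcases hwv with ⟨rfl | hvw, hwM⟩
    exacts [hwM hv, hwM (hall w hvw)]
  · have hxw : x ∈ ({w} : Set V) := hw ▸ ⟨Or.inr hvx, hx⟩
    have hyw : y ∈ ({w} : Set V) := hw ▸ ⟨Or.inr hvy, hy⟩
    exact hxy (hxw.trans hyw.symm)

theorem monitored_monotone : Monotone (monitored G S) :=
  monotone_nat_of_le_succ fun _ => Set.subset_union_left

theorem monitored_subset_of_isForcingClosed (hS : closedNbhdSet G S ⊆ M)
    (hM : IsForcingClosed G M) (i : ℕ) : monitored G S i ⊆ M := by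
  induction i with
  | zero => exact hS
  | succ i ih =>
    rintro w (hw | ⟨v, hv, hvw⟩)
    · exact ih hw
    · by_contra hwM
      have hw : w ∈ insert v (G.neighborSet v) \ monitored G S i := hvw ▸ rfl
      have hne : (insert v (G.neighborSet v) \ M).Nonempty := ⟨w, hw.1, hwM⟩
      exact hM v (ih hv) w (hne.subset_singleton_iff.1 (hvw ▸ Set.sdiff_subset_sdiff_right ih))

theorem isForcingClosed_monitored_of_succ_eq {i : ℕ}
    (h : monitored G S (i + 1) = monitored G S i) : IsForcingClosed G (monitored G S i) :=
  fun v hv w hvw => by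
    have hw : w ∈ insert v (G.neighborSet v) \ monitored G S i := hvw ▸ rfl
    exact hw.2 (h ▸ Or.inr ⟨v, hv, hvw⟩)

/-- Equivalently, the complement of `M` is a fort disjoint from `N[S]`. -/
structure IsMonitoringTrap (G : SimpleGraph V) (S M : Set V) : Prop where
  closedNbhdSet_subset : closedNbhdSet G S ⊆ M
  isForcingClosed : IsForcingClosed G M
  ne_univ : M ≠ Set.univ

theorem IsMonitoringTrap.mem_of_adj (hM : IsMonitoringTrap G S M) {s v : V} (hs : s ∈ S)
    (hsv : G.Adj s v) : v ∈ M :=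
  hM.closedNbhdSet_subset (Or.inr ⟨s, hs, hsv⟩)

theorem not_isPowerDominatingSet_iff [Finite V] :
    ¬ IsPowerDominatingSet G S ↔ ∃ M, IsMonitoringTrap G S M := by
  constructor
  · intro hS
    obtain ⟨n, hn⟩ := wellFoundedGT_iff_monotone_chain_condition.1 inferInstance
      ⟨monitored G S, monitored_monotone⟩
    refine ⟨monitored G S n, monitored_monotone n.zero_le, ?_, fun h => hS ⟨n, h⟩⟩
    exact isForcingClosed_monitored_of_succ_eq (hn (n + 1) n.le_succ).symm
  · rintro ⟨M, hS, hM, hne⟩ ⟨i, hi⟩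
    exact hne (Set.eq_univ_of_univ_subset (hi ▸ monitored_subset_of_isForcingClosed hS hM i))

end PowerDomination

theorem Set.ncard_le_of_forall_lt_mul_of_separated {A : Set ℕ} {d q : ℕ}
    (hlt : ∀ a ∈ A, a < d * q) (hsep : ∀ a ∈ A, ∀ b ∈ A, a < b → a + d ≤ b) :
    A.ncard ≤ q := by
  have hmono : StrictMonoOn (· / d) A := fun a ha b hb hab => by
    have hd : 0 < d := Nat.pos_of_ne_zero fun hd => by simpa [hd] using hlt a ha
    exact (Nat.add_div_right a hd ▸ Nat.div_le_div_right (hsep a ha b hb hab) : a / d + 1 ≤ b / d)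
  calc A.ncard ≤ (Set.Iio q).ncard :=
        Set.ncard_le_ncard_of_injOn (· / d) (fun a ha => Nat.div_lt_of_lt_mul (hlt a ha))
          hmono.injOn
    _ = q := Set.ncard_Iio_nat q

namespace Ladder

abbrev graph (k : ℕ) : SimpleGraph (Fin k × Fin 2) := pathGraph k □ pathGraph 2

variable {k : ℕ} {M S : Set (Fin k × Fin 2)}

theorem adj_iff {a b : Fin k × Fin 2} :
    (graph k).Adj a b ↔
      ((a.1 : ℕ) + 1 = b.1 ∨ (b.1 : ℕ) + 1 = a.1) ∧ a.2 = b.2 ∨ a.1 = b.1 ∧ a.2 ≠ b.2 := by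
  rw [boxProd_adj, pathGraph_adj, pathGraph_adj]
  omega

/-- Columns are indexed by `ℤ`, and a column outside `0, …, k - 1` is vacuously full: the two
ends of the ladder then behave like full columns `-1` and `k`. -/
def ColFull (M : Set (Fin k × Fin 2)) (c : ℤ) : Prop :=
  ∀ v : Fin k × Fin 2, (v.1 : ℤ) = c → v ∈ M

theorem colFull_of_lt_zero_or_le {c : ℤ} (hc : c < 0 ∨ k ≤ c) : ColFull M c :=
  fun v hv => absurd hv (by omega)

theorem exists_vertex {c : ℕ} (hc : c < k) (r : Fin 2) :
    ∃ v : Fin k × Fin 2, (v.1 : ℕ) = c ∧ v.2 = r :=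
  ⟨(⟨c, hc⟩, r), rfl, rfl⟩

theorem colFull_add_one (hM : IsForcingClosed (graph k) M) {c : ℤ} (hc : 0 ≤ c)
    (h₁ : ColFull M (c - 1)) (h₂ : ColFull M c) : ColFull M (c + 1) := by
  intro w hw
  by_contra hwM
  obtain ⟨v, hv₁, hv₂⟩ := exists_vertex (k := k) (c := w.1 - 1) (by omega) w.2
  obtain ⟨y, hvy, hy, hyw⟩ :=
    hM.exists_adj_notMem_ne (h₂ v (by omega)) (adj_iff.2 (by omega)) hwM
  rw [adj_iff] at hvy
  rw [Ne, Prod.ext_iff] at hyw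
  rcases (by omega : (y.1 : ℤ) = c - 1 ∨ (y.1 : ℤ) = c) with h | h
  exacts [hy (h₁ y h), hy (h₂ y h)]

theorem colFull_sub_one (hM : IsForcingClosed (graph k) M) {c : ℤ} (hc : c < k)
    (h₁ : ColFull M (c + 1)) (h₂ : ColFull M c) : ColFull M (c - 1) := by
  intro w hw
  by_contra hwM
  obtain ⟨v, hv₁, hv₂⟩ := exists_vertex (k := k) (c := w.1 + 1) (by omega) w.2
  obtain ⟨y, hvy, hy, hyw⟩ :=
    hM.exists_adj_notMem_ne (h₂ v (by omega)) (adj_iff.2 (by omega)) hwM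
  rw [adj_iff] at hvy
  rw [Ne, Prod.ext_iff] at hyw
  rcases (by omega : (y.1 : ℤ) = c + 1 ∨ (y.1 : ℤ) = c) with h | h
  exacts [hy (h₁ y h), hy (h₂ y h)]

theorem colFull_of_mem (hM : IsForcingClosed (graph k) M) {v : Fin k × Fin 2} (hv : v ∈ M)
    (h₁ : ColFull M (v.1 - 1)) (h₂ : ColFull M (v.1 + 1)) : ColFull M v.1 := by
  intro w hw
  by_contra hwM
  have hwv : w.2 ≠ v.2 := fun h => hwM (Prod.ext (by omega) h ▸ hv)
  obtain ⟨y, hvy, hy, hyw⟩ := hM.exists_adj_notMem_ne hv (adj_iff.2 (by omega)) hwM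
  rw [adj_iff] at hvy
  rw [Ne, Prod.ext_iff] at hyw
  rcases (by omega : (y.1 : ℤ) = v.1 - 1 ∨ (y.1 : ℤ) = v.1 + 1) with h | h
  exacts [hy (h₁ y h), hy (h₂ y h)]

theorem eq_univ_of_colFull_of_colFull_add_one (hM : IsForcingClosed (graph k) M) {c : ℤ}
    (hc₀ : -1 ≤ c) (hc : c < k) (h₁ : ColFull M c) (h₂ : ColFull M (c + 1)) :
    M = Set.univ := by
  have up : ∀ d, c ≤ d → ColFull M d ∧ ColFull M (d + 1) := by
    intro d hd
    induction d, hd using Int.leInduction with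
    | base => exact ⟨h₁, h₂⟩
    | succ d hd ih =>
      refine ⟨ih.2, colFull_add_one hM (by omega) ?_ ih.2⟩
      simpa using ih.1
  have down : ∀ d, d ≤ c → ColFull M d ∧ ColFull M (d + 1) := by
    intro d hd
    induction d, hd using Int.leInductionDown with
    | base => exact ⟨h₁, h₂⟩
    | pred d hd ih =>
      refine ⟨colFull_sub_one hM (by omega) ih.2 ih.1, ?_⟩
      simpa using ih.1
  refine Set.eq_univ_of_forall fun w => ?_
  rcases le_total c w.1 with h | h
  exacts [(up _ h).1 w rfl, (down _ h).1 w rfl]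

theorem eq_univ_of_mem_of_colFull (hM : IsForcingClosed (graph k) M) {v : Fin k × Fin 2}
    (hv : v ∈ M) (h₁ : ColFull M (v.1 - 1)) (h₂ : ColFull M (v.1 + 1)) : M = Set.univ :=
  eq_univ_of_colFull_of_colFull_add_one hM (by omega) (by omega) h₁
    (by simpa using colFull_of_mem hM hv h₁ h₂)

theorem colFull_of_isMonitoringTrap (hM : IsMonitoringTrap (graph k) S M) {s : Fin k × Fin 2}
    (hs : s ∈ S) : ColFull M s.1 := by
  intro w hw
  by_cases h : w.2 = s.2
  · exact hM.closedNbhdSet_subset (Or.inl (Prod.ext (by omega) h ▸ hs))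
  · exact hM.mem_of_adj hs (adj_iff.2 (by omega))

theorem add_three_le_col_of_colFull (hM : IsMonitoringTrap (graph k) S M)
    {s : Fin k × Fin 2} (hs : s ∈ S) {c : ℤ} (hc₀ : -1 ≤ c) (hc : ColFull M c)
    (hcs : c < s.1) : c + 3 ≤ s.1 := by
  have hs' := colFull_of_isMonitoringTrap hM hs
  by_contra h
  rcases (by omega : c + 1 = s.1 ∨ c + 2 = s.1) with h | h
  · exact hM.ne_univ (eq_univ_of_colFull_of_colFull_add_one hM.isForcingClosed hc₀ (by omega)
      hc (h ▸ hs'))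
  · obtain ⟨v, hv₁, hv₂⟩ := exists_vertex (k := k) (c := s.1 - 1) (by omega) s.2
    refine hM.ne_univ (eq_univ_of_mem_of_colFull hM.isForcingClosed
      (hM.mem_of_adj (v := v) hs (adj_iff.2 (by omega))) ?_ ?_)
    · convert hc using 1; omega
    · convert hs' using 1; omega

theorem col_add_three_le_col_of_colFull (hM : IsMonitoringTrap (graph k) S M)
    {s : Fin k × Fin 2} (hs : s ∈ S) {c : ℤ} (hc₀ : c ≤ k) (hc : ColFull M c)
    (hsc : s.1 < c) : s.1 + 3 ≤ c := by
  have hs' := colFull_of_isMonitoringTrap hM hs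
  by_contra h
  rcases (by omega : s.1 + 1 = c ∨ s.1 + 2 = c) with h | h
  · exact hM.ne_univ (eq_univ_of_colFull_of_colFull_add_one hM.isForcingClosed (by omega)
      (by omega) hs' (h ▸ hc))
  · obtain ⟨v, hv₁, hv₂⟩ := exists_vertex (k := k) (c := s.1 + 1) (by omega) s.2
    refine hM.ne_univ (eq_univ_of_mem_of_colFull hM.isForcingClosed
      (hM.mem_of_adj (v := v) hs (adj_iff.2 (by omega))) ?_ ?_)
    · convert hs' using 1; omega
    · convert hc using 1; omega

theorem two_le_col (hM : IsMonitoringTrap (graph k) S M)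
    {s : Fin k × Fin 2} (hs : s ∈ S) : 2 ≤ (s.1 : ℕ) := by
  have := add_three_le_col_of_colFull hM hs le_rfl (colFull_of_lt_zero_or_le (by omega)) (by omega)
  omega

theorem col_add_three_le (hM : IsMonitoringTrap (graph k) S M)
    {s : Fin k × Fin 2} (hs : s ∈ S) : (s.1 : ℕ) + 3 ≤ k := by
  have := col_add_three_le_col_of_colFull hM hs le_rfl (colFull_of_lt_zero_or_le (by omega)) (by omega)
  omega

theorem col_add_three_le_col (hM : IsMonitoringTrap (graph k) S M)
    {s t : Fin k × Fin 2} (hs : s ∈ S) (ht : t ∈ S) (hst : s ≠ t) (h : (s.1 : ℕ) ≤ t.1) :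
    (s.1 : ℕ) + 3 ≤ t.1 := by
  rcases h.lt_or_eq with h | h
  · have := add_three_le_col_of_colFull hM ht (by omega) (colFull_of_isMonitoringTrap hM hs) (by omega)
    omega
  · have hrow : s.2 ≠ t.2 := fun h₂ => hst (Prod.ext (Fin.ext h) h₂)
    refine absurd (eq_univ_of_colFull_of_colFull_add_one hM.isForcingClosed (c := s.1)
      (by omega) (by omega) (colFull_of_isMonitoringTrap hM hs) fun w hw => ?_) hM.ne_univ
    by_cases hw₂ : w.2 = s.2
    · exact hM.mem_of_adj hs (adj_iff.2 (by omega))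
    · exact hM.mem_of_adj ht (adj_iff.2 (by omega))

theorem ncard_le_of_not_isPowerDominatingSet (hS : ¬ IsPowerDominatingSet (graph k) S) :
    S.ncard ≤ (k - 4 + 2) / 3 := by
  obtain ⟨M, hM⟩ := not_isPowerDominatingSet_iff.1 hS
  have hinj : Set.InjOn (fun s : Fin k × Fin 2 => (s.1 : ℕ) - 2) S := by
    intro s hs t ht hst
    by_contra hne
    have := two_le_col hM hs
    have := two_le_col hM ht
    simp only at hst
    have := col_add_three_le_col hM hs ht hne (by omega)
    omega
  rw [← hinj.ncard_image]
  refine Set.ncard_le_of_forall_lt_mul_of_separated (d := 3) ?_ ?_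
  · rintro _ ⟨s, hs, rfl⟩
    have := two_le_col hM hs
    have := col_add_three_le hM hs
    dsimp only
    omega
  · rintro _ ⟨s, hs, rfl⟩ _ ⟨t, ht, rfl⟩ h
    dsimp only at h ⊢
    have := two_le_col hM hs
    have := col_add_three_le_col hM hs ht (by rintro rfl; omega) (by omega)
    omega

/-- Block `i < m` consists of the columns `3i + 1, 3i + 2, 3i + 3`; its centre is the vertex of
column `3i + 2` in row `i % 2`. -/
def blockCenters (k m : ℕ) : Set (Fin k × Fin 2) :=
  {v | (v.1 : ℕ) % 3 = 2 ∧ (v.1 : ℕ) < 3 * m ∧ (v.2 : ℕ) = v.1 / 3 % 2}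

/-- The closed neighbourhood of the centres: in each block the middle column and row `i % 2` of
the outer columns. The rows alternate so that the outer vertices of adjacent blocks do not see
each other; each of them then has two unmonitored neighbours. -/
def blocks (k m : ℕ) : Set (Fin k × Fin 2) :=
  {v | 1 ≤ (v.1 : ℕ) ∧ (v.1 : ℕ) ≤ 3 * m ∧ ((v.1 : ℕ) % 3 = 2 ∨ (v.2 : ℕ) = (v.1 - 1) / 3 % 2)}

theorem closedNbhdSet_blockCenters_subset (m : ℕ) :
    closedNbhdSet (graph k) (blockCenters k m) ⊆ blocks k m := by
  rintro v (hv | ⟨u, hu, huv⟩)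
  all_goals simp only [blockCenters, blocks, Set.mem_ofPred_eq] at *
  · omega
  · rw [adj_iff] at huv
    omega

theorem isForcingClosed_blocks {m : ℕ} (h : 3 * m + 2 ≤ k) :
    IsForcingClosed (graph k) (blocks k m) := by
  refine isForcingClosed_of_forall fun v hv => ?_
  simp only [blocks, Set.mem_ofPred_eq] at hv
  by_cases hcenter : (v.1 : ℕ) % 3 = 2 ∧ (v.2 : ℕ) = v.1 / 3 % 2
  · refine Or.inl fun x hx => ?_
    rw [adj_iff] at hx
    simp only [blocks, Set.mem_ofPred_eq]
    omega
  · refine Or.inr ?_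
    rcases (by omega : (v.1 : ℕ) % 3 = 2 ∨ (v.1 : ℕ) % 3 = 1 ∨ (v.1 : ℕ) % 3 = 0) with h | h | h
      <;> [refine ⟨(⟨v.1 - 1, by omega⟩, v.2), (⟨v.1 + 1, by omega⟩, v.2), ?_⟩;
        refine ⟨(v.1, 1 - v.2), (⟨v.1 - 1, by omega⟩, v.2), ?_⟩;
        refine ⟨(v.1, 1 - v.2), (⟨v.1 + 1, by omega⟩, v.2), ?_⟩]
    all_goals
      simp only [adj_iff, blocks, Ne, Prod.ext_iff, Set.mem_ofPred_eq, Fin.ext_iff, true_and,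
        and_true, true_or, not_true_eq_false, and_false, or_false]
      omega

theorem blocks_ne_univ (hk : 0 < k) (m : ℕ) : blocks k m ≠ Set.univ := fun h => by
  have := h ▸ Set.mem_univ ((⟨0, hk⟩ : Fin k), (0 : Fin 2))
  simp [blocks] at this

theorem ncard_blockCenters {m : ℕ} (h : 3 * m ≤ k) : (blockCenters k m).ncard = m := by
  refine (Set.ncard_congr (fun v _ => (v.1 : ℕ) / 3) ?_ ?_ ?_).trans (Set.ncard_Iio_nat m)
  · intro v hv
    simp only [blockCenters, Set.mem_ofPred_eq, Set.mem_Iio] at hv ⊢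
    omega
  · intro v w hv hw hvw
    simp only [blockCenters, Set.mem_ofPred_eq] at hv hw
    ext <;> omega
  · intro i hi
    rw [Set.mem_Iio] at hi
    refine ⟨(⟨3 * i + 2, by omega⟩, ⟨i % 2, by omega⟩), ?_, by simp only; omega⟩
    simp only [blockCenters, Set.mem_ofPred_eq]
    omega

theorem exists_not_isPowerDominatingSet_ncard_eq {m : ℕ} (h : 3 * m + 2 ≤ k) :
    ∃ S, ¬ IsPowerDominatingSet (graph k) S ∧ S.ncard = m :=
  ⟨blockCenters k m, not_isPowerDominatingSet_iff.2 ⟨blocks k m,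
    closedNbhdSet_blockCenters_subset m, isForcingClosed_blocks h, blocks_ne_univ (by omega) m⟩,
    ncard_blockCenters (by omega)⟩

end Ladder

theorem failedPowerDominationNumber_ladder (k : ℕ) (hk : 4 ≤ k) :
    failedPowerDominationNumber
      (SimpleGraph.pathGraph k □ SimpleGraph.pathGraph 2) = ((k - 4) + 2) / 3 := by
  refine IsGreatest.csSup_eq ⟨Ladder.exists_not_isPowerDominatingSet_ncard_eq (by omega), ?_⟩
  rintro _ ⟨S, hS, rfl⟩
  exact Ladder.ncard_le_of_not_isPowerDominatingSet hS
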